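/- For the optimal profile ṽ_ε(s) = tanh(−3s/(4ε)) and any shift δ ∈ ℝ, the shifted-profile mismatch satisfies ε·∫_ℝ (ṽ_ε(s) − ṽ_ε(s−δ))² ds = δ²·(1 + Θ(δ,ε)) where |Θ(δ,ε)| ≤ C·(|δ|/ε + δ²/ε²) for a universal constant C > 0. -/

import Mathlib

open MeasureTheory Filter Topology Set Real

/-!
With `c = 3δ/(4ε)`, the substitution `x = 3s/(4ε)` turns the mismatch into
`(16ε²/3)·(c coth c - 1 - c²/3)`, because `∫ (tanh x - tanh (x - c))² dx = 4 (c coth c - 1)`: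
with `a = tanh x`, `b = tanh (x - c)`, the addition formula `a - b = tanh c · (1 - a b)` and
`tanh' = 1 - tanh²` show that `(2 / tanh c)(log cosh x - log cosh (x - c)) - a - b` is an
antiderivative, whose limits at `±∞` are `±(2c / tanh c - 2)`.
Then `c coth c - 1 - c²/3 = g c / sinh c` with `g c = c cosh c - (1 + c²/3) sinh c`;
since `g' c = -(c/3)(c cosh c - sinh c)` and `(c cosh c - sinh c)' = c sinh c`, two mean value
estimates give `|g c| ≤ c⁴ |sinh c| / 3`, so the mismatch is at most `9δ⁴/(16ε²)`.
-/

theorem abs_image_sub_le_of_abs_deriv_le {f f' : ℝ → ℝ} {c M : ℝ} (hc : 0 ≤ c)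
    (hf : ∀ x, HasDerivAt f (f' x) x) (hM : ∀ x ∈ Icc 0 c, |f' x| ≤ M) :
    |f c - f 0| ≤ M * c := by
  simpa using norm_image_sub_le_of_norm_deriv_le_segment' (fun x _ => (hf x).hasDerivWithinAt)
    (fun x hx => hM x (Ico_subset_Icc_self hx)) c ⟨hc, le_rfl⟩

namespace Real

theorem tanh_sub_tanh (x y : ℝ) : tanh x - tanh y = sinh (x - y) / (cosh x * cosh y) := by
  rw [tanh_eq_sinh_div_cosh, tanh_eq_sinh_div_cosh, sinh_sub]
  field_simp [(cosh_pos x).ne', (cosh_pos y).ne']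

theorem tanh_sub_tanh_eq_tanh_sub_mul (x y : ℝ) :
    tanh x - tanh y = tanh (x - y) * (1 - tanh x * tanh y) := by
  have hxy := cosh_pos (x - y)
  rw [cosh_sub] at hxy
  rw [tanh_eq_sinh_div_cosh, tanh_eq_sinh_div_cosh, tanh_eq_sinh_div_cosh, sinh_sub, cosh_sub]
  field_simp [(cosh_pos x).ne', (cosh_pos y).ne', hxy.ne']

theorem hasDerivAt_tanh (x : ℝ) : HasDerivAt tanh (1 - tanh x ^ 2) x := by
  have h : HasDerivAt (fun y => sinh y / cosh y) _ x :=
    (hasDerivAt_sinh x).div (hasDerivAt_cosh x) (cosh_pos x).ne'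
  rw [← funext tanh_eq_sinh_div_cosh] at h
  convert h using 1
  rw [tanh_eq_sinh_div_cosh]
  field_simp [(cosh_pos x).ne']

@[fun_prop]
theorem continuous_tanh : Continuous tanh :=
  continuous_iff_continuousAt.2 fun x => (hasDerivAt_tanh x).continuousAt

theorem hasDerivAt_log_cosh (x : ℝ) : HasDerivAt (fun y => log (cosh y)) (tanh x) x := by
  simpa [tanh_eq_sinh_div_cosh] using (hasDerivAt_cosh x).log (cosh_pos x).ne'

theorem tendsto_tanh_atTop : Tendsto tanh atTop (𝓝 1) := by
  have h : Tendsto (fun x => exp (-x) / cosh x) atTop (𝓝 0) :=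
    squeeze_zero (fun x => by positivity)
      (fun x => div_le_self (exp_pos _).le (one_le_cosh x))
      (tendsto_exp_atBot.comp tendsto_neg_atTop_atBot)
  convert (tendsto_const_nhds (x := (1 : ℝ))).sub h using 2 with x
  · rw [tanh_eq_sinh_div_cosh, ← cosh_sub_sinh]
    field_simp [(cosh_pos x).ne']
    ring
  · simp

theorem tendsto_tanh_atBot : Tendsto tanh atBot (𝓝 (-1)) := by
  convert (tendsto_tanh_atTop.comp tendsto_neg_atBot_atTop).neg using 2 with x
  simp [tanh_neg]

theorem log_cosh_sub_log_cosh (x y : ℝ) :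
    log (cosh x) - log (cosh y) = log (cosh (x - y) + sinh (x - y) * tanh y) := by
  rw [← log_div (cosh_pos x).ne' (cosh_pos y).ne', tanh_eq_sinh_div_cosh]
  congr 1
  conv_lhs => rw [show x = (x - y) + y by ring, cosh_add]
  field_simp [(cosh_pos y).ne']

theorem tendsto_log_cosh_sub_log_cosh_sub_atTop (c : ℝ) :
    Tendsto (fun x => log (cosh x) - log (cosh (x - c))) atTop (𝓝 c) := by
  have h := ((tendsto_tanh_atTop.comp (tendsto_atTop_add_const_right atTop (-c) tendsto_id)
    ).const_mul (sinh c)).const_add (cosh c)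
  rw [mul_one, cosh_add_sinh] at h
  convert (h.log (exp_pos c).ne').congr fun x => ?_ using 2
  · rw [log_exp]
  · simp only [Function.comp_apply, id, ← sub_eq_add_neg]
    rw [log_cosh_sub_log_cosh, sub_sub_cancel]

theorem tendsto_log_cosh_sub_log_cosh_sub_atBot (c : ℝ) :
    Tendsto (fun x => log (cosh x) - log (cosh (x - c))) atBot (𝓝 (-c)) := by
  have h := ((tendsto_tanh_atBot.comp (tendsto_atBot_add_const_right atBot (-c) tendsto_id)
    ).const_mul (sinh c)).const_add (cosh c)
  rw [mul_neg_one, ← sub_eq_add_neg, cosh_sub_sinh] at h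
  convert (h.log (exp_pos (-c)).ne').congr fun x => ?_ using 2
  · rw [log_exp]
  · simp only [Function.comp_apply, id, ← sub_eq_add_neg]
    rw [log_cosh_sub_log_cosh, sub_sub_cancel]

theorem sq_tanh_sub_tanh_le (x y : ℝ) :
    (tanh x - tanh y) ^ 2 ≤ sinh (x - y) ^ 2 * (1 + x ^ 2)⁻¹ := by
  have hx : 1 + x ^ 2 ≤ cosh x ^ 2 := by
    rcases le_total 0 x with h | h
    · nlinarith [cosh_sq x, self_le_sinh_iff.2 h]
    · nlinarith [cosh_sq x, sinh_le_self_iff.2 h]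
  have hy : 1 ≤ cosh y ^ 2 := by nlinarith [one_le_cosh y]
  rw [tanh_sub_tanh, div_pow, mul_pow, div_eq_mul_inv]
  gcongr
  nlinarith

theorem integrable_sq_tanh_sub_tanh_sub (c : ℝ) :
    Integrable fun x => (tanh x - tanh (x - c)) ^ 2 := by
  refine (integrable_inv_one_add_sq.const_mul (sinh c ^ 2)).mono'
    (Continuous.aestronglyMeasurable (by fun_prop)) (Eventually.of_forall fun x => ?_)
  rw [norm_of_nonneg (sq_nonneg _)]
  simpa using sq_tanh_sub_tanh_le x (x - c)

theorem hasDerivAt_antideriv_sq_tanh_sub_tanh_sub {c : ℝ} (hc : c ≠ 0) (x : ℝ) :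
    HasDerivAt (fun y => 2 / tanh c * (log (cosh y) - log (cosh (y - c))) - tanh y - tanh (y - c))
      ((tanh x - tanh (x - c)) ^ 2) x := by
  have hT : tanh c ≠ 0 := by
    rw [tanh_eq_sinh_div_cosh]; exact div_ne_zero (sinh_ne_zero.2 hc) (cosh_pos c).ne'
  have h := ((((hasDerivAt_log_cosh x).sub ((hasDerivAt_log_cosh (x - c)).comp_sub_const x c)
    ).const_mul (2 / tanh c)).sub (hasDerivAt_tanh x)).sub
      ((hasDerivAt_tanh (x - c)).comp_sub_const x c)
  refine h.congr_deriv ?_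
  have key := tanh_sub_tanh_eq_tanh_sub_mul x (x - c)
  rw [sub_sub_cancel] at key
  field_simp
  linear_combination 2 * key

theorem integral_sq_tanh_sub_tanh_sub {c : ℝ} (hc : c ≠ 0) :
    ∫ x, (tanh x - tanh (x - c)) ^ 2 = 4 * (c / tanh c - 1) := by
  have htop := (((tendsto_log_cosh_sub_log_cosh_sub_atTop c).const_mul (2 / tanh c)).sub
    tendsto_tanh_atTop).sub
      (tendsto_tanh_atTop.comp (tendsto_atTop_add_const_right atTop (-c) tendsto_id))
  have hbot := (((tendsto_log_cosh_sub_log_cosh_sub_atBot c).const_mul (2 / tanh c)).sub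
    tendsto_tanh_atBot).sub
      (tendsto_tanh_atBot.comp (tendsto_atBot_add_const_right atBot (-c) tendsto_id))
  rw [integral_of_hasDerivAt_of_tendsto (hasDerivAt_antideriv_sq_tanh_sub_tanh_sub hc)
    (integrable_sq_tanh_sub_tanh_sub c) hbot htop]
  ring

theorem integral_sq_tanh_mul_sub_tanh_mul_sub {a δ : ℝ} (ha : a ≠ 0) (hδ : δ ≠ 0) :
    ∫ s, (tanh (a * s) - tanh (a * (s - δ))) ^ 2 = |a|⁻¹ * (4 * (a * δ / tanh (a * δ) - 1)) := by
  simp_rw [mul_sub a]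
  rw [Measure.integral_comp_mul_left (fun x => (tanh x - tanh (x - a * δ)) ^ 2) a,
    integral_sq_tanh_sub_tanh_sub (mul_ne_zero ha hδ), abs_inv, smul_eq_mul]

theorem abs_mul_cosh_sub_sinh_le {c : ℝ} (hc : 0 ≤ c) :
    |c * cosh c - sinh c| ≤ c ^ 2 * sinh c := by
  have h := abs_image_sub_le_of_abs_deriv_le (f := fun x => x * cosh x - sinh x)
    (f' := fun x => x * sinh x) (M := c * sinh c) hc (fun x => ?_) (fun x hx => ?_)
  · simpa [sq, mul_right_comm] using h
  · exact (((hasDerivAt_id x).mul (hasDerivAt_cosh x)).sub (hasDerivAt_sinh x)).congr_deriv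
      (show _ = x * sinh x by simp)
  · rw [abs_of_nonneg (mul_nonneg hx.1 (sinh_nonneg_iff.2 hx.1))]
    exact mul_le_mul hx.2 (sinh_le_sinh.2 hx.2) (sinh_nonneg_iff.2 hx.1) hc

theorem abs_mul_cosh_sub_one_add_sq_div_three_mul_sinh_le_of_nonneg {c : ℝ} (hc : 0 ≤ c) :
    |c * cosh c - (1 + c ^ 2 / 3) * sinh c| ≤ c ^ 4 / 3 * sinh c := by
  have h := abs_image_sub_le_of_abs_deriv_le
    (f := fun x => x * cosh x - (1 + x ^ 2 / 3) * sinh x)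
    (f' := fun x => -(x / 3) * (x * cosh x - sinh x)) (M := c ^ 3 / 3 * sinh c) hc
    (fun x => ?_) (fun x hx => ?_)
  · convert h using 1
    · simp
    · ring
  · refine (((hasDerivAt_id x).mul (hasDerivAt_cosh x)).sub
      ((((hasDerivAt_pow 2 x).div_const 3).const_add 1).mul (hasDerivAt_sinh x))).congr_deriv
      (show _ = -(x / 3) * (x * cosh x - sinh x) by simp; ring)
  · rw [abs_mul, abs_neg, abs_of_nonneg (by linarith [hx.1] : 0 ≤ x / 3)]
    have hx0 := hx.1
    have hsinh := sinh_nonneg_iff.2 hx0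
    calc x / 3 * |x * cosh x - sinh x| ≤ x / 3 * (x ^ 2 * sinh x) := by
          gcongr; exact abs_mul_cosh_sub_sinh_le hx0
      _ ≤ c / 3 * (c ^ 2 * sinh c) := by
          have hxc := hx.2
          gcongr
          exact sinh_le_sinh.2 hxc
      _ = c ^ 3 / 3 * sinh c := by ring

theorem abs_mul_cosh_sub_one_add_sq_div_three_mul_sinh_le (c : ℝ) :
    |c * cosh c - (1 + c ^ 2 / 3) * sinh c| ≤ c ^ 4 / 3 * |sinh c| := by
  rcases le_total 0 c with hc | hc
  · rw [abs_of_nonneg (sinh_nonneg_iff.2 hc)]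
    exact abs_mul_cosh_sub_one_add_sq_div_three_mul_sinh_le_of_nonneg hc
  · have h := abs_mul_cosh_sub_one_add_sq_div_three_mul_sinh_le_of_nonneg (neg_nonneg.2 hc)
    rw [abs_of_nonpos (sinh_nonpos_iff.2 hc)]
    rw [cosh_neg, sinh_neg, ← abs_neg] at h
    convert h using 2 <;> ring

theorem abs_div_tanh_sub_one_sub_sq_div_three_le {c : ℝ} (hc : c ≠ 0) :
    |c / tanh c - 1 - c ^ 2 / 3| ≤ c ^ 4 / 3 := by
  have hs : sinh c ≠ 0 := sinh_ne_zero.2 hc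
  have h : c / tanh c - 1 - c ^ 2 / 3 = (c * cosh c - (1 + c ^ 2 / 3) * sinh c) / sinh c := by
    rw [tanh_eq_sinh_div_cosh]
    field_simp
    ring
  rw [h, abs_div, div_le_iff₀ (abs_pos.2 hs)]
  exact abs_mul_cosh_sub_one_add_sq_div_three_mul_sinh_le c

end Real

/-- Shifted-profile mismatch: there is a universal constant `C > 0` such that
for all `ε > 0` and all shifts `δ`,
`|ε·∫_ℝ (ṽ_ε(s) − ṽ_ε(s−δ))² ds − δ²| ≤ C·δ²·(|δ|/ε + δ²/ε²)`,
where `ṽ_ε(s) = tanh(−3s/(4ε))`. -/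
theorem shifted_profile_mismatch :
    ∃ C : ℝ, 0 < C ∧ ∀ ε : ℝ, 0 < ε → ∀ δ : ℝ,
      |ε * (∫ s : ℝ,
          (Real.tanh (-(3 * s) / (4 * ε)) - Real.tanh (-(3 * (s - δ)) / (4 * ε))) ^ 2)
        - δ ^ 2| ≤ C * δ ^ 2 * (|δ| / ε + δ ^ 2 / ε ^ 2) := by
  refine ⟨1, one_pos, fun ε hε δ => ?_⟩
  rcases eq_or_ne δ 0 with rfl | hδ
  · simp
  set a := 3 / (4 * ε) with ha
  have ha0 : 0 < a := by positivity
  have hprofile : ∀ s : ℝ, (tanh (-(3 * s) / (4 * ε)) - tanh (-(3 * (s - δ)) / (4 * ε))) ^ 2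
      = (tanh (a * s) - tanh (a * (s - δ))) ^ 2 := by
    intro s
    rw [show -(3 * s) / (4 * ε) = -(a * s) by ring,
      show -(3 * (s - δ)) / (4 * ε) = -(a * (s - δ)) by ring, tanh_neg, tanh_neg]
    ring
  simp_rw [hprofile]
  rw [integral_sq_tanh_mul_sub_tanh_mul_sub ha0.ne' hδ, abs_of_pos ha0]
  set c := a * δ with hc
  have hmismatch : ε * (a⁻¹ * (4 * (c / tanh c - 1))) - δ ^ 2
      = 16 * ε ^ 2 / 3 * (c / tanh c - 1 - c ^ 2 / 3) := by
    rw [hc, ha]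
    field_simp
    ring
  rw [hmismatch, abs_mul, abs_of_pos (by positivity)]
  calc 16 * ε ^ 2 / 3 * |c / tanh c - 1 - c ^ 2 / 3|
      ≤ 16 * ε ^ 2 / 3 * (c ^ 4 / 3) := by
        gcongr; exact abs_div_tanh_sub_one_sub_sq_div_three_le (mul_ne_zero ha0.ne' hδ)
    _ = 9 / 16 * (δ ^ 4 / ε ^ 2) := by
        rw [hc, ha]
        field_simp
        ring
    _ ≤ 1 * δ ^ 2 * (|δ| / ε + δ ^ 2 / ε ^ 2) := by
        have hcubic : 0 ≤ δ ^ 2 * (|δ| / ε) := by positivity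
        have hquartic : 0 ≤ δ ^ 4 / ε ^ 2 := by positivity
        linear_combination hcubic + 7 / 16 * hquartic
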